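/- There is an absolute constant c > 0 with the following property. Let f ∈ ℤ[x] be monic and irreducible of degree d ≥ 2, let D_f ≥ 1 be the absolute value of the discriminant of f, let θ ∈ ℂ be a root of f, and let K = ℚ(θ). For a prime p, let W(p) denote the number of roots of the mod-p reduction of f in 𝔽_p. Then for all x ≥ 2, |π_K(x) − Σ_{p ≤ x, p prime} W(p)| ≤ c·d·(√x + log(3·D_f)), where π_K(x) is the number of prime ideals 𝔭 of the ring of integers O_K with N𝔭 ≤ x. -/

import Mathlib

open scoped Classical

noncomputable section

/-- `π_K(x)` is the number of (nonzero) prime ideals of `𝓞 K` of norm at most `x`. -/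
def piK (K : Type) [Field K] [NumberField K] (x : ℝ) : ℕ :=
  {P : Ideal (NumberField.RingOfIntegers K) |
    P.IsPrime ∧ P ≠ ⊥ ∧ (Ideal.absNorm P : ℝ) ≤ x}.ncard

/-- For a prime `p`, `Wroots f p` is the number of roots in `𝔽_p` of the mod-`p`
reduction of `f`. -/
def Wroots (f : Polynomial ℤ) (p : ℕ) : ℕ :=
  {a : ZMod p | Polynomial.aeval a f = 0}.ncard

end

/-!
Split `π_K(x)` according to whether the norm of `𝔭` is a rational prime `q` or a proper prime
power. In the second case `𝔭` contains a prime `q` with `q² ≤ N𝔭 ≤ x`, and at most `d` primes of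
`𝓞_K` contain a given `q`, so there are at most `d·√x` such `𝔭`. The primes of norm `q` are the
kernels of the ring homomorphisms `𝓞_K → 𝔽_q`. The discriminant `D` of the basis
`1, θ, …, θ^(d-1)` lies in the conductor of `ℤ[θ]`, so for `q ∤ D` we have `𝓞_K/q ≅ ℤ[θ]/q` and
these homomorphisms correspond to the roots of `f` mod `q`: there are exactly `W(q)` of them. Each
of the `ω(D) ≤ 2 log |D|` remaining primes contributes at most `d` to either side, and `|D| = D_f`.
-/

open Polynomial NumberField Finset

theorem Nat.card_primesLE_le (n : ℕ) : (Nat.primesLE n).card ≤ n := by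
  rw [Nat.primesLE_eq_filter_Icc_one]
  exact (card_filter_le _ _).trans (by simp)

theorem Real.nat_sqrt_floor_le_sqrt {x : ℝ} (hx : 0 ≤ x) : (⌊x⌋₊.sqrt : ℝ) ≤ √x :=
  Real.nat_sqrt_le_real_sqrt.trans (Real.sqrt_le_sqrt (Nat.floor_le hx))

theorem Nat.card_primeFactors_le_two_mul_log {m : ℕ} (hm : m ≠ 0) :
    (m.primeFactors.card : ℝ) ≤ 2 * Real.log m := by
  have hpow : 2 ^ m.primeFactors.card ≤ m :=
    calc 2 ^ m.primeFactors.card = ∏ _p ∈ m.primeFactors, 2 := (prod_const 2).symm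
      _ ≤ ∏ p ∈ m.primeFactors, p :=
        prod_le_prod' fun p hp => (Nat.prime_of_mem_primeFactors hp).two_le
      _ ≤ m := Nat.le_of_dvd (Nat.pos_of_ne_zero hm) (Nat.prod_primeFactors_dvd m)
  have hlog : m.primeFactors.card * Real.log 2 ≤ Real.log m := by
    rw [← Real.log_pow]
    exact Real.log_le_log (by positivity) (by exact_mod_cast hpow)
  nlinarith [Real.log_two_gt_d9, Nat.cast_nonneg (α := ℝ) m.primeFactors.card]

theorem abs_sum_sub_le_card_primeFactors_mul {s : Finset ℕ} {m d : ℕ} {a b : ℕ → ℕ}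
    (hs : ∀ q ∈ s, q.Prime) (hm : m ≠ 0) (hab : ∀ q ∈ s, ¬ q ∣ m → a q = b q)
    (ha : ∀ q ∈ s, a q ≤ d) (hb : ∀ q ∈ s, b q ≤ d) :
    |∑ q ∈ s, ((a q : ℝ) - b q)| ≤ m.primeFactors.card * d :=
  calc |∑ q ∈ s, ((a q : ℝ) - b q)| ≤ ∑ q ∈ s, |(a q : ℝ) - b q| := abs_sum_le_sum_abs _ _
    _ ≤ ∑ q ∈ s with q ∣ m, (d : ℝ) := by
      rw [sum_filter]
      refine sum_le_sum fun q hq => ?_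
      split_ifs with hqm
      · exact abs_sub_le_of_nonneg_of_le (by positivity) (by exact_mod_cast ha q hq)
          (by positivity) (by exact_mod_cast hb q hq)
      · simp [hab q hq hqm]
    _ ≤ m.primeFactors.card * d := by
      rw [sum_const, nsmul_eq_mul]
      gcongr
      exact fun q hq => Nat.mem_primeFactors.2 ⟨hs q (mem_filter.1 hq).1, (mem_filter.1 hq).2, hm⟩

theorem Finset.prod_prod_erase_eq_prod_prod_Ioi_mul {ι M : Type*} [Fintype ι] [LinearOrder ι]
    [LocallyFiniteOrderBot ι] [LocallyFiniteOrderTop ι] [CommMonoid M] (g : ι → ι → M) :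
    ∏ i, ∏ j ∈ univ.erase i, g i j = ∏ i, ∏ j ∈ Ioi i, (g i j * g j i) := by
  have hsplit (i : ι) : univ.erase i = Iio i ∪ Ioi i := by ext j; simp
  have hswap : ∏ i, ∏ j ∈ Iio i, g i j = ∏ i, ∏ j ∈ Ioi i, g j i :=
    prod_comm' fun i j => by simp
  simp_rw [hsplit, prod_union (disjoint_left.2 fun j h1 h2 => (mem_Iio.1 h1).not_gt (mem_Ioi.1 h2)),
    prod_mul_distrib, hswap, mul_comm]

theorem Nat.card_ringHom_eq_of_surjective {A A' B : Type*} [Ring A] [Ring A'] [Ring B]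
    (f : A →+* A') (hf : Function.Surjective f)
    (h : ∀ g : A →+* B, RingHom.ker f ≤ RingHom.ker g) :
    Nat.card (A' →+* B) = Nat.card (A →+* B) :=
  Nat.card_congr ((f.liftOfSurjective hf).symm.trans (Equiv.subtypeUnivEquiv h))

theorem Nat.card_ringHom_zmod_eq_card_ideal (S : Type*) [CommRing S] (p : ℕ) [Fact p.Prime] :
    Nat.card (S →+* ZMod p) = Nat.card {P : Ideal S // Nat.card (S ⧸ P) = p} := by
  refine Nat.card_congr (Equiv.ofBijective
    (fun ψ => ⟨RingHom.ker ψ, by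
      rw [Nat.card_congr (RingHom.quotientKerEquivOfSurjective (ZMod.ringHom_surjective ψ)).toEquiv,
        Nat.card_zmod]⟩)
    ⟨fun ψ₁ ψ₂ h => ZMod.ringHom_eq_of_ker_eq _ _ (congrArg Subtype.val h), ?_⟩)
  rintro ⟨P, hP⟩
  have : Fintype (S ⧸ P) :=
    @Fintype.ofFinite _ (Nat.finite_of_card_ne_zero (by simp [hP, NeZero.ne]))
  let e := ZMod.ringEquivOfPrime (S ⧸ P) Fact.out (by rw [← Nat.card_eq_fintype_card, hP])
  exact ⟨e.symm.toRingHom.comp (Ideal.Quotient.mk P),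
    Subtype.ext (by simp only [RingHom.ker_equiv_comp, Ideal.mk_ker])⟩

theorem Ideal.map_span_natCast_le_ker {A : Type*} [CommRing A] (p : ℕ) (ψ : A →+* ZMod p) :
    (span {(p : ℤ)}).map (algebraMap ℤ A) ≤ RingHom.ker ψ := by
  rw [map_span, span_le, Set.image_singleton, Set.singleton_subset_iff]
  simp

theorem Ideal.sup_eq_top_of_mem_of_notMem {R : Type*} [CommRing R] {I M : Ideal R}
    (hM : M.IsMaximal) {z : R} (hzI : z ∈ I) (hzM : z ∉ M) : I ⊔ M = ⊤ := by
  by_contra h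
  exact hzM (hM.eq_of_le h le_sup_right ▸ mem_sup_left hzI)

theorem IsIntegrallyClosed.minpoly_eq_of_irreducible_of_monic {R S : Type*} [CommRing R]
    [IsDomain R] [IsIntegrallyClosed R] [CommRing S] [IsDomain S] [Algebra R S]
    [Module.IsTorsionFree R S] {f : R[X]} (hm : f.Monic) (hirr : Irreducible f) {s : S}
    (hs : aeval s f = 0) : minpoly R s = f := by
  have hint : IsIntegral R s := ⟨f, hm, by rwa [← aeval_def]⟩
  have hdvd := minpoly.isIntegrallyClosed_dvd hint hs
  exact eq_of_monic_of_associated (minpoly.monic hint) hm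
    (associated_of_dvd_dvd hdvd ((minpoly.irreducible hint).dvd_symm hirr hdvd))

theorem minpoly_rat_eq_map {L : Type*} [Field L] [Algebra ℚ L] {f : ℤ[X]} (hm : f.Monic)
    (hirr : Irreducible f) {θ : L} (hroot : aeval θ f = 0) :
    minpoly ℚ θ = f.map (algebraMap ℤ ℚ) :=
  (minpoly.eq_of_irreducible_of_monic (hm.irreducible_iff_irreducible_map_fraction_map.1 hirr)
    (by rwa [aeval_map_algebraMap]) (hm.map _)).symm

theorem Nat.card_ringHom_zmod_eq_card_roots_minpoly {S : Type*} [CommRing S] [IsDomain S]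
    [Module.IsTorsionFree ℤ S] {x : S} (hx : IsIntegral ℤ x) (p : ℕ)
    (hcond : (conductor ℤ x).comap (algebraMap ℤ S) ⊔ Ideal.span {(p : ℤ)} = ⊤) :
    Nat.card (S →+* ZMod p) = Nat.card {a : ZMod p // aeval a (minpoly ℤ x) = 0} := by
  let J := Ideal.span {(p : ℤ)}
  let A := Algebra.adjoin ℤ ({x} : Set S)
  let pb := Algebra.adjoin.powerBasis' hx
  let e := quotAdjoinEquivQuotMap hcond (FaithfulSMul.algebraMap_injective A S)
  calc Nat.card (S →+* ZMod p)
      = Nat.card (S ⧸ J.map (algebraMap ℤ S) →+* ZMod p) :=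
        (Nat.card_ringHom_eq_of_surjective _ Ideal.Quotient.mk_surjective
          (by simpa using Ideal.map_span_natCast_le_ker p)).symm
    _ = Nat.card (A ⧸ J.map (algebraMap ℤ A) →+* ZMod p) :=
        Nat.card_ringHom_eq_of_surjective (e : _ →+* _) e.surjective
          fun _ => by simp only [RingHom.ker_coe_equiv, bot_le]
    _ = Nat.card (A →+* ZMod p) :=
        Nat.card_ringHom_eq_of_surjective _ Ideal.Quotient.mk_surjective
          (by simpa using Ideal.map_span_natCast_le_ker p)
    _ = Nat.card {a : ZMod p // aeval a (minpoly ℤ pb.gen) = 0} :=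
        Nat.card_congr ((RingHom.equivIntAlgHom _ _).trans pb.liftEquiv)
    _ = Nat.card {a : ZMod p // aeval a (minpoly ℤ x) = 0} := by
        rw [← Algebra.adjoin.powerBasis'_minpoly_gen hx]

theorem wroots_le_natDegree {f : ℤ[X]} (hf : f.Monic) (p : ℕ) [Fact p.Prime] :
    Wroots f p ≤ f.natDegree := by
  have : {a : ZMod p | aeval a f = 0} = f.rootSet (ZMod p) := by
    ext a
    simp [mem_rootSet', (hf.map _).ne_zero]
  rw [Wroots, this]
  exact ncard_rootSet_le f _

namespace Ideal

variable {S : Type*} [CommRing S] [IsDedekindDomain S] [Module.Free ℤ S]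

theorem ncard_setOf_absNorm_eq_natCard_ringHom (p : ℕ) [Fact p.Prime] :
    {P : Ideal S | absNorm P = p}.ncard = Nat.card (S →+* ZMod p) := by
  rw [Nat.card_ringHom_zmod_eq_card_ideal, ← Nat.card_coe_set_eq]
  rfl

theorem ncard_setOf_absNorm_eq_wroots {x : S} (hx : IsIntegral ℤ x) {f : ℤ[X]}
    (hf : minpoly ℤ x = f) (p : ℕ) [Fact p.Prime]
    (hcond : (conductor ℤ x).comap (algebraMap ℤ S) ⊔ span {(p : ℤ)} = ⊤) :
    {P : Ideal S | absNorm P = p}.ncard = Wroots f p := by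
  rw [ncard_setOf_absNorm_eq_natCard_ringHom,
    Nat.card_ringHom_zmod_eq_card_roots_minpoly hx p hcond, hf, Wroots, ← Nat.card_coe_set_eq]
  rfl

theorem isPrime_ne_bot_natCast_mem_of_absNorm_eq {p : ℕ} (hp : p.Prime) {P : Ideal S}
    (hP : absNorm P = p) : P.IsPrime ∧ P ≠ ⊥ ∧ (p : S) ∈ P :=
  ⟨isPrime_of_irreducible_absNorm (hP ▸ hp), fun h => hp.ne_zero (by rw [← hP, h, absNorm_bot]),
    hP ▸ absNorm_mem P⟩

variable [Module.Finite ℤ S]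

theorem card_le_finrank_of_forall_natCast_mem {p : ℕ} (hp : p.Prime) {F : Finset (Ideal S)}
    (hF : ∀ P ∈ F, P.IsPrime ∧ P ≠ ⊥ ∧ (p : S) ∈ P) : F.card ≤ Module.finrank ℤ S := by
  have hdvd : ∏ P ∈ F, absNorm P ∣ p ^ Module.finrank ℤ S := by
    rw [← map_prod, ← absNorm_span_natCast]
    refine absNorm_dvd_absNorm_of_le (le_of_dvd (prod_primes_dvd _ (fun P hP => ?_)
      (fun P hP => ?_)))
    · exact (prime_iff_isPrime (hF P hP).2.1).2 (hF P hP).1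
    · exact dvd_iff_le.2 ((span_singleton_le_iff_mem _).2 (hF P hP).2.2)
  have hle : ∀ P ∈ F, p ≤ absNorm P := fun P hP => by
    obtain ⟨k, -, hk⟩ := (Nat.dvd_prime_pow hp).1 ((dvd_prod_of_mem _ hP).trans hdvd)
    have hk0 : k ≠ 0 := by
      rintro rfl
      exact (hF P hP).1.ne_top (absNorm_eq_one_iff.1 hk)
    exact hk ▸ Nat.le_self_pow hk0 p
  refine (Nat.pow_le_pow_iff_right hp.one_lt).1 ?_
  calc p ^ F.card = ∏ _P ∈ F, p := (prod_const p).symm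
    _ ≤ ∏ P ∈ F, absNorm P := prod_le_prod' hle
    _ ≤ p ^ Module.finrank ℤ S := Nat.le_of_dvd (pow_pos hp.pos _) hdvd

theorem exists_prime_natCast_mem_sq_le_absNorm {P : Ideal S} (hP : P.IsPrime) (hP0 : P ≠ ⊥)
    (hnp : ¬ (absNorm P).Prime) : ∃ q : ℕ, q.Prime ∧ (q : S) ∈ P ∧ q ^ 2 ≤ absNorm P := by
  have : Finite (S ⧸ P) := finiteQuotientOfFreeOfNeBot P hP0
  have : Fintype (S ⧸ P) := Fintype.ofFinite _
  have : P.IsMaximal := hP.isMaximal hP0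
  let := Quotient.field P
  obtain ⟨n, hq, hcard⟩ := FiniteField.card (S ⧸ P) (ringChar (S ⧸ P))
  have hnorm : absNorm P = ringChar (S ⧸ P) ^ (n : ℕ) := by
    rw [absNorm_apply, Submodule.cardQuot_apply, Nat.card_eq_fintype_card, hcard]
  refine ⟨ringChar (S ⧸ P), hq, ?_, hnorm ▸ Nat.pow_le_pow_right hq.pos ?_⟩
  · rw [← Quotient.eq_zero_iff_mem, map_natCast, ringChar.Nat.cast_ringChar]
  · have : (n : ℕ) ≠ 1 := fun h => hnp (by rwa [hnorm, h, pow_one])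
    have := n.pos
    omega

variable [CharZero S]

theorem ncard_setOf_absNorm_eq_le_finrank {p : ℕ} (hp : p.Prime) :
    {P : Ideal S | absNorm P = p}.ncard ≤ Module.finrank ℤ S := by
  rw [Set.ncard_eq_toFinset_card _ (finite_setOfPred_absNorm_eq p)]
  exact card_le_finrank_of_forall_natCast_mem hp fun P hP =>
    isPrime_ne_bot_natCast_mem_of_absNorm_eq hp (by simpa using hP)

theorem ncard_setOf_absNorm_le_not_prime_le (n : ℕ) :
    {P : Ideal S | P.IsPrime ∧ P ≠ ⊥ ∧ absNorm P ≤ n ∧ ¬ (absNorm P).Prime}.ncard ≤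
      Module.finrank ℤ S * n.sqrt := by
  classical
  have hfin : {P : Ideal S | P.IsPrime ∧ P ≠ ⊥ ∧ absNorm P ≤ n ∧ ¬ (absNorm P).Prime}.Finite :=
    (finite_setOfPred_absNorm_le n).subset fun P hP => hP.2.2.1
  have key : ∀ P ∈ hfin.toFinset, ∃ q : ℕ, q.Prime ∧ (q : S) ∈ P ∧ q ^ 2 ≤ absNorm P :=
    fun P hP => by
      simp only [Set.Finite.mem_toFinset, Set.mem_ofPred_eq] at hP
      exact exists_prime_natCast_mem_sq_le_absNorm hP.1 hP.2.1 hP.2.2.2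
  choose! q hq using key
  rw [Set.ncard_eq_toFinset_card _ hfin]
  refine (card_le_mul_card_image_of_maps_to (f := q) (t := Nat.primesLE n.sqrt)
    (fun P hP => ?_) _ fun r hr => ?_).trans (Nat.mul_le_mul_left _ (Nat.card_primesLE_le _))
  · have hP' := hP
    simp only [Set.Finite.mem_toFinset, Set.mem_ofPred_eq] at hP'
    exact Nat.mem_primesLE.2 ⟨Nat.le_sqrt'.2 ((hq P hP).2.2.trans hP'.2.2.1), (hq P hP).1⟩
  · refine card_le_finrank_of_forall_natCast_mem (Nat.prime_of_mem_primesLE hr) fun P hP => ?_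
    obtain ⟨hPs, rfl⟩ := mem_filter.1 hP
    have hP' := hPs
    simp only [Set.Finite.mem_toFinset, Set.mem_ofPred_eq] at hP'
    exact ⟨hP'.1, hP'.2.1, (hq P hPs).2.1⟩

theorem ncard_setOf_absNorm_le_eq (n : ℕ) :
    {P : Ideal S | P.IsPrime ∧ P ≠ ⊥ ∧ absNorm P ≤ n}.ncard =
      ∑ q ∈ Nat.primesLE n, {P : Ideal S | absNorm P = q}.ncard +
        {P : Ideal S | P.IsPrime ∧ P ≠ ⊥ ∧ absNorm P ≤ n ∧ ¬ (absNorm P).Prime}.ncard := by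
  classical
  have hfin : {P : Ideal S | P.IsPrime ∧ P ≠ ⊥ ∧ absNorm P ≤ n}.Finite :=
    (finite_setOfPred_absNorm_le n).subset fun P hP => hP.2.2
  rw [Set.ncard_eq_toFinset_card _ hfin,
    ← card_filter_add_card_filter_not (fun P => (absNorm P).Prime),
    card_eq_sum_card_fiberwise (f := absNorm) (t := Nat.primesLE n) fun P hP => ?_]
  · congr 1
    · refine sum_congr rfl fun q hq => ?_
      rw [← Set.ncard_coe_finset]
      congr 1
      ext P
      simp only [coe_filter, mem_filter, Set.Finite.mem_toFinset, Set.mem_ofPred_eq]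
      refine ⟨fun h => h.2, ?_⟩
      rintro rfl
      obtain ⟨hle, hq⟩ := Nat.mem_primesLE.1 hq
      obtain ⟨hP, hP0, -⟩ := isPrime_ne_bot_natCast_mem_of_absNorm_eq hq rfl
      exact ⟨⟨⟨hP, hP0, hle⟩, hq⟩, rfl⟩
    · rw [← Set.ncard_coe_finset]
      congr 1
      ext P
      simp only [coe_filter, Set.Finite.mem_toFinset, Set.mem_ofPred_eq, and_assoc]
  · simp only [coe_filter, Set.Finite.mem_toFinset, Set.mem_ofPred_eq] at hP
    exact Nat.mem_primesLE.2 ⟨hP.1.2.2, hP.2⟩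

end Ideal

namespace PowerBasis

variable {F L E : Type*} [Field F] [Field L] [Algebra F L] [Algebra.IsSeparable F L]

theorem exists_equiv_algHom_apply_gen [Field E] [Algebra F E] [IsAlgClosed E]
    (pb : PowerBasis F L) (θs : Fin pb.dim → E)
    (h : (minpoly F pb.gen).map (algebraMap F E) = ∏ i, (X - C (θs i))) :
    ∃ e : Fin pb.dim ≃ (L →ₐ[F] E), ∀ i, e i pb.gen = θs i := by
  have hroot (σ : L →ₐ[F] E) : ∃ i, θs i = σ pb.gen := by
    have h0 : eval (σ pb.gen) ((minpoly F pb.gen).map (algebraMap F E)) = 0 := by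
      rw [eval_map_algebraMap, aeval_algHom_apply, minpoly.aeval, map_zero]
    rw [h, eval_prod, prod_eq_zero_iff] at h0
    obtain ⟨i, -, hi⟩ := h0
    exact ⟨i, (sub_eq_zero.1 (by simpa using hi)).symm⟩
  choose m hm using hroot
  have hinj : Function.Injective m := fun σ τ hστ =>
    pb.algHom_ext (by rw [← hm σ, ← hm τ, hστ])
  have : Module.Finite F L := pb.finite
  have hbij : Function.Bijective m := (Fintype.bijective_iff_injective_and_card m).2
    ⟨hinj, by rw [AlgHom.card, pb.finrank, Fintype.card_fin]⟩
  refine ⟨(Equiv.ofBijective m hbij).symm, fun i => ?_⟩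
  rw [← hm, Equiv.ofBijective_apply_symm_apply m hbij]

theorem norm_algebraMap_discr [Algebra F ℂ] (pb : PowerBasis F L) {d : ℕ} (θs : Fin d → ℂ)
    (h : (minpoly F pb.gen).map (algebraMap F ℂ) = ∏ i, (X - C (θs i))) :
    ‖algebraMap F ℂ (Algebra.discr F pb.basis)‖ = ‖∏ i, ∏ j ∈ univ.erase i, (θs i - θs j)‖ := by
  obtain rfl : pb.dim = d := by
    simpa [pb.natDegree_minpoly, natDegree_finsetProd_X_sub_C_eq_card] using congrArg natDegree h
  have : Module.Finite F L := pb.finite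
  obtain ⟨e, he⟩ := pb.exists_equiv_algHom_apply_gen θs h
  rw [Algebra.discr_powerBasis_eq_prod F ℂ pb e, prod_prod_erase_eq_prod_prod_Ioi_mul, norm_prod,
    norm_prod]
  refine prod_congr rfl fun i _ => ?_
  rw [norm_prod, norm_prod]
  refine prod_congr rfl fun j _ => ?_
  rw [he, he, norm_pow, norm_mul, norm_sub_rev (θs i), sq]

end PowerBasis

namespace NumberField

variable {K : Type*} [Field K] [NumberField K]

theorem exists_intCast_eq_discr (pb : PowerBasis ℚ K) (hgen : IsIntegral ℤ pb.gen) :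
    ∃ z : ℤ, (z : ℚ) = Algebra.discr ℚ pb.basis := by
  refine IsIntegrallyClosed.isIntegral_iff.mp (Algebra.discr_isIntegral ℚ fun i => ?_)
  rw [PowerBasis.basis_eq_pow]
  exact hgen.pow _

theorem intCast_mem_conductor_of_eq_discr (pb : PowerBasis ℚ K) {θ : 𝓞 K} (hθ : (θ : K) = pb.gen)
    {z : ℤ} (hz : (z : ℚ) = Algebra.discr ℚ pb.basis) : (z : 𝓞 K) ∈ conductor ℤ θ := by
  rw [mem_conductor_iff]
  intro b
  have hgen : IsIntegral ℤ pb.gen := hθ ▸ RingOfIntegers.isIntegral_coe θ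
  have hmem := Algebra.discr_mul_isIntegral_mem_adjoin ℚ hgen (RingOfIntegers.isIntegral_coe b)
  rw [Algebra.adjoin_singleton_eq_range_aeval] at hmem ⊢
  obtain ⟨q, hq⟩ := hmem
  refine ⟨q, RingOfIntegers.coe_injective ?_⟩
  simp only [AlgHom.toRingHom_eq_coe, RingHom.coe_coe] at hq ⊢
  rw [← hz, ← hθ] at hq
  rw [← aeval_algebraMap_apply, hq, map_mul, map_intCast, Rat.smul_def, Rat.cast_intCast]

theorem finrank_eq_natDegree {f : ℤ[X]} (hm : f.Monic) (hirr : Irreducible f) {θ : K}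
    (hroot : aeval θ f = 0) (hadj : IntermediateField.adjoin ℚ {θ} = ⊤) :
    Module.finrank ℤ (𝓞 K) = f.natDegree := by
  rw [RingOfIntegers.rank, ← IntermediateField.finrank_top', ← hadj,
    IntermediateField.adjoin.finrank (Algebra.IsIntegral.isIntegral θ),
    minpoly_rat_eq_map hm hirr hroot, hm.natDegree_map]

theorem exists_natAbs_eq_and_ncard_setOf_absNorm_eq_wroots {f : ℤ[X]} (hm : f.Monic)
    (hirr : Irreducible f) {θ : K} (hroot : aeval θ f = 0)
    (hadj : IntermediateField.adjoin ℚ {θ} = ⊤) {d : ℕ} (θs : Fin d → ℂ)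
    (hfact : f.map (Int.castRingHom ℂ) = ∏ i, (X - C (θs i))) :
    ∃ z : ℤ, (z.natAbs : ℝ) = ‖∏ i, ∏ j ∈ univ.erase i, (θs i - θs j)‖ ∧
      ∀ p : ℕ, p.Prime → ¬ (p : ℤ) ∣ z →
        {P : Ideal (𝓞 K) | Ideal.absNorm P = p}.ncard = Wroots f p := by
  have hint : IsIntegral ℤ θ := ⟨f, hm, by rwa [← aeval_def]⟩
  let θ' : 𝓞 K := ⟨θ, hint⟩
  have hmin : minpoly ℤ θ' = f := IsIntegrallyClosed.minpoly_eq_of_irreducible_of_monic hm hirr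
    (RingOfIntegers.coe_injective (by rwa [← aeval_algebraMap_apply, map_zero]))
  let pb := PowerBasis.ofAdjoinEqTop (Algebra.IsIntegral.isIntegral (R := ℚ) θ)
    (IntermediateField.adjoin_eq_top_iff.1 hadj)
  have hgen : pb.gen = θ := PowerBasis.ofAdjoinEqTop_gen _ _
  obtain ⟨z, hz⟩ := exists_intCast_eq_discr pb (hgen ▸ hint)
  refine ⟨z, ?_, fun p hp hpz => ?_⟩
  · have hroots : (minpoly ℚ pb.gen).map (algebraMap ℚ ℂ) = ∏ i, (X - C (θs i)) := by
      rw [hgen, minpoly_rat_eq_map hm hirr hroot, Polynomial.map_map, ← hfact]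
      congr 1
    rw [← pb.norm_algebraMap_discr θs hroots, ← hz]
    simp
  · have : Fact p.Prime := ⟨hp⟩
    refine Ideal.ncard_setOf_absNorm_eq_wroots (RingOfIntegers.isIntegral θ') hmin p
      (Ideal.sup_eq_top_of_mem_of_notMem inferInstance (z := z) ?_ ?_)
    · simpa using intCast_mem_conductor_of_eq_discr pb (θ := θ') hgen.symm hz
    · rwa [Ideal.mem_span_singleton]

end NumberField

theorem piK_eq_sum_add (K : Type) [Field K] [NumberField K] {x : ℝ} (hx : 0 ≤ x) :
    piK K x = ∑ q ∈ Nat.primesLE ⌊x⌋₊, {P : Ideal (𝓞 K) | Ideal.absNorm P = q}.ncard +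
      {P : Ideal (𝓞 K) | P.IsPrime ∧ P ≠ ⊥ ∧ Ideal.absNorm P ≤ ⌊x⌋₊ ∧
        ¬ (Ideal.absNorm P).Prime}.ncard := by
  rw [piK, ← Ideal.ncard_setOf_absNorm_le_eq]
  simp only [Nat.le_floor_iff hx]

/-- For `f ∈ ℤ[x]` monic irreducible of degree `d ≥ 2` with discriminant of absolute
value `D_f ≥ 1` (expressed via the complex roots `θs` of `f`), and `K = ℚ(θ)` for a root
`θ` of `f`, one has `|π_K(x) − ∑_{p ≤ x} W(p)| ≤ c·d·(√x + log(3 D_f))` for all `x ≥ 2`,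
with `c > 0` an absolute constant. -/
theorem piK_close_to_sum_Wroots :
    ∃ c : ℝ, 0 < c ∧
      ∀ (f : Polynomial ℤ) (d : ℕ), f.Monic → Irreducible f → f.natDegree = d → 2 ≤ d →
        ∀ θs : Fin d → ℂ,
          f.map (Int.castRingHom ℂ) = ∏ i, (Polynomial.X - Polynomial.C (θs i)) →
          ∀ Df : ℝ,
            Df = ‖∏ i, ∏ j ∈ Finset.univ.erase i, (θs i - θs j)‖ →
            1 ≤ Df →
            ∀ (K : Type) [Field K] [NumberField K] (θ : K),
              Polynomial.aeval θ f = 0 →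
              IntermediateField.adjoin ℚ {θ} = ⊤ →
              ∀ x : ℝ, 2 ≤ x →
                |(piK K x : ℝ) -
                    ∑ p ∈ (Finset.range (⌊x⌋₊ + 1)).filter Nat.Prime, (Wroots f p : ℝ)| ≤
                  c * d * (Real.sqrt x + Real.log (3 * Df)) := by
  refine ⟨2, two_pos, fun f d hm hirr hdeg _ θs hfact Df hDf hDf1 K _ _ θ hroot hadj x hx => ?_⟩
  obtain ⟨z, hzDf, hgood⟩ :=
    NumberField.exists_natAbs_eq_and_ncard_setOf_absNorm_eq_wroots hm hirr hroot hadj θs hfact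
  rw [← hDf] at hzDf
  have hrank := hdeg ▸ NumberField.finrank_eq_natDegree hm hirr hroot hadj
  have hz0 : z.natAbs ≠ 0 := fun h => by simp [h] at hzDf; linarith
  have hsum := abs_sum_sub_le_card_primeFactors_mul (s := Nat.primesLE ⌊x⌋₊)
    (a := fun q => {P : Ideal (𝓞 K) | Ideal.absNorm P = q}.ncard) (b := Wroots f)
    (fun q hq => Nat.prime_of_mem_primesLE hq) hz0
    (fun q hq hqz => hgood q (Nat.prime_of_mem_primesLE hq) (by rwa [Int.natCast_dvd]))
    (fun q hq => hrank ▸ Ideal.ncard_setOf_absNorm_eq_le_finrank (Nat.prime_of_mem_primesLE hq))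
    (fun q hq => have := Fact.mk (Nat.prime_of_mem_primesLE hq); hdeg ▸ wroots_le_natDegree hm q)
  have hrest := hrank ▸ Ideal.ncard_setOf_absNorm_le_not_prime_le (S := 𝓞 K) ⌊x⌋₊
  have hsqrt := Real.nat_sqrt_floor_le_sqrt (x := x) (by linarith)
  have hω := Nat.card_primeFactors_le_two_mul_log hz0
  have hlog : Real.log z.natAbs ≤ Real.log (3 * Df) := Real.log_le_log (by positivity) (by linarith)
  change |_ - ∑ p ∈ Nat.primesLE ⌊x⌋₊, (Wroots f p : ℝ)| ≤ _
  rw [piK_eq_sum_add K (by linarith), Nat.cast_add, Nat.cast_sum, add_sub_right_comm,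
    ← sum_sub_distrib]
  calc _ ≤ _ + _ := (abs_add_le _ _).trans_eq (by rw [Nat.abs_cast])
    _ ≤ (z.natAbs.primeFactors.card * d + d * ⌊x⌋₊.sqrt : ℝ) :=
        add_le_add hsum (by exact_mod_cast hrest)
    _ ≤ 2 * d * (√x + Real.log (3 * Df)) := by nlinarith [Nat.cast_nonneg (α := ℝ) d]
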